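/- Let b ∈ ℝ, σ ≥ 0, n ≥ 0, and let g ∈ C^{2n+2}(ℝ) be such that there exist constants M < ∞ and c > 0 with |g^{(i)}(y)| ≤ M e^{c|y|} for all 0 ≤ i ≤ 2n+2 and all y ∈ ℝ. Let Lg := b g' + (σ²/2) g'' with iterates L⁰g = g, L^{k+1}g = L(L^k g), and for t > 0 let 𝒩(bt, σ²t) denote the Gaussian measure on ℝ with mean bt and variance σ²t. Then for every t > 0: ∫ g d𝒩(bt, σ²t) = g(0) + Σ_{k=1}^{n} (t^k/k!) (L^k g)(0) + (t^{n+1}/n!) ∫₀¹ (1−α)^n [ ∫ (L^{n+1} g) d𝒩(bαt, σ²αt) ] dα. -/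

import Mathlib

open MeasureTheory ProbabilityTheory intervalIntegral

/-- The generator `Lg = b g' + (σ²/2) g''` of Brownian motion with drift. -/
noncomputable def driftGen (b σ : ℝ) (g : ℝ → ℝ) : ℝ → ℝ :=
  fun x => b * deriv g x + σ ^ 2 / 2 * deriv (deriv g) x

/-!
Write `Φ_h(s) = ∫ h d𝒩(bs, σ²s)` (`bmExpectation b σ h s`). After the substitution `s = u²`,
`Φ_h(u²) = E h(σuZ + bu²)` for a standard Gaussian `Z`, which is smooth in `u` even at `u = 0`.
Differentiating under the integral and applying Stein's identity `E[Z ψ(Z)] = E[ψ'(Z)]` gives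
`Φ_h' = Φ_{Lh}` on `(0, ∞)`, while `Φ_h` is continuous on `[0, ∞)` with `Φ_h(0) = h(0)`.
The generator maps `C^{m+2}` functions with derivatives bounded by `M e^{c|y|}` to `C^m` functions
of the same kind, and these bounds make all the Gaussian integrals converge. The expansion is then
Taylor's formula with integral remainder for `Φ_g` at `0`, rescaled to `[0, 1]`.
-/

open Real Set Filter Topology
open scoped NNReal

section Gaussian

variable {μ : ℝ} {v : ℝ≥0}

lemma integrable_exp_mul_abs_gaussianReal (c : ℝ) :
    Integrable (fun x => exp (c * |x|)) (gaussianReal μ v) := by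
  refine ((integrable_exp_mul_gaussianReal c).add (integrable_exp_mul_gaussianReal (-c))).mono'
    (by fun_prop) (ae_of_all _ fun x => ?_)
  rw [norm_of_nonneg (exp_pos _).le]
  rcases abs_cases x with ⟨hx, -⟩ | ⟨hx, -⟩ <;> simp [hx, exp_nonneg]

lemma integrable_of_abs_le_exp {f : ℝ → ℝ} {K c : ℝ}
    (hf : AEStronglyMeasurable f (gaussianReal μ v)) (hb : ∀ x, |f x| ≤ K * exp (c * |x|)) :
    Integrable f (gaussianReal μ v) :=
  ((integrable_exp_mul_abs_gaussianReal c).const_mul K).mono' hf (ae_of_all _ hb)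

lemma integrable_gaussianReal_iff (hv : v ≠ 0) {f : ℝ → ℝ} :
    Integrable f (gaussianReal μ v) ↔ Integrable (fun x => gaussianPDFReal μ v x * f x) := by
  rw [gaussianReal_of_var_ne_zero μ hv, integrable_withDensity_iff_integrable_smul'
    (measurable_gaussianPDF μ v) (ae_of_all _ fun _ => gaussianPDF_lt_top)]
  simp only [toReal_gaussianPDF, smul_eq_mul]

lemma hasDerivAt_gaussianPDFReal (μ : ℝ) (v : ℝ≥0) (x : ℝ) :
    HasDerivAt (gaussianPDFReal μ v) (-(x - μ) / v * gaussianPDFReal μ v x) x := by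
  have hq : HasDerivAt (fun x => -(x - μ) ^ 2 / (2 * v)) (-(2 * (x - μ)) / (2 * v)) x := by
    simpa using (((hasDerivAt_id x).sub_const μ).pow 2).neg.div_const (2 * (v : ℝ))
  rw [gaussianPDFReal_def]
  refine (hq.exp.const_mul (√(2 * π * v))⁻¹).congr_deriv ?_
  ring

/-- **Stein's lemma**. -/
theorem integral_sub_mul_eq_mul_integral_deriv_gaussianReal {ψ ψ' : ℝ → ℝ}
    (hψ : ∀ x, HasDerivAt ψ (ψ' x) x) (hint : Integrable ψ (gaussianReal μ v))
    (hint_mul : Integrable (fun x => (x - μ) * ψ x) (gaussianReal μ v))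
    (hint' : Integrable ψ' (gaussianReal μ v)) :
    ∫ x, (x - μ) * ψ x ∂gaussianReal μ v = v * ∫ x, ψ' x ∂gaussianReal μ v := by
  rcases eq_or_ne v 0 with rfl | hv
  · simp [gaussianReal_zero_var]
  rw [integrable_gaussianReal_iff hv] at hint hint_mul hint'
  have hv' : (v : ℝ) ≠ 0 := by exact_mod_cast hv
  have hibp := integral_mul_deriv_eq_deriv_mul_of_integrable (fun x _ => hψ x)
    (fun x _ => hasDerivAt_gaussianPDFReal μ v x)
    (by convert hint_mul.const_mul (-(v : ℝ)⁻¹) using 2; simp only [Pi.mul_apply]; ring)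
    (by convert hint' using 2; simp only [Pi.mul_apply]; ring)
    (by convert hint using 2; simp only [Pi.mul_apply]; ring)
  simp only [integral_gaussianReal_eq_integral_smul hv, smul_eq_mul]
  calc ∫ x, gaussianPDFReal μ v x * ((x - μ) * ψ x)
      = ∫ x, -(v : ℝ) * (ψ x * (-(x - μ) / v * gaussianPDFReal μ v x)) := by
        congr 1 with x; field_simp
    _ = v * ∫ x, gaussianPDFReal μ v x * ψ' x := by
        simp only [MeasureTheory.integral_const_mul, hibp, mul_comm (ψ' _)]
        ring

end Gaussian

section ExpGrowth

variable {h : ℝ → ℝ} {M c : ℝ}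

lemma nonneg_of_abs_le_mul_exp (hb : ∀ y, |h y| ≤ M * exp (c * |y|)) : 0 ≤ M :=
  nonneg_of_mul_nonneg_left ((abs_nonneg _).trans (hb 0)) (exp_pos _)

lemma integrable_mul_of_abs_le_exp {μ : ℝ} {v : ℝ≥0}
    (hh : AEStronglyMeasurable h (gaussianReal μ v)) (hb : ∀ y, |h y| ≤ M * exp (c * |y|)) :
    Integrable (fun x => x * h x) (gaussianReal μ v) := by
  have hM := nonneg_of_abs_le_mul_exp hb
  refine integrable_of_abs_le_exp (K := M) (c := c + 1) (aestronglyMeasurable_id.mul hh) fun x => ?_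
  calc |x * h x| ≤ |x| * (M * exp (c * |x|)) := by rw [abs_mul]; gcongr; exact hb x
    _ = M * (|x| * exp (c * |x|)) := by ring
    _ ≤ M * exp ((c + 1) * |x|) := by
        rw [add_mul, one_mul, exp_add, mul_comm (exp _)]
        gcongr
        linarith [add_one_le_exp |x|]

lemma abs_comp_le_of_abs_le_exp (hc : 0 ≤ c) (hb : ∀ y, |h y| ≤ M * exp (c * |y|))
    (b σ : ℝ) {r R : ℝ} (hr : |r| ≤ R) (z : ℝ) :
    |h (σ * r * z + b * r ^ 2)| ≤ M * exp (c * |b| * R ^ 2) * exp (c * |σ| * R * |z|) := by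
  have hM := nonneg_of_abs_le_mul_exp hb
  have harg : |σ * r * z + b * r ^ 2| ≤ |b| * R ^ 2 + |σ| * R * |z| := by
    calc |σ * r * z + b * r ^ 2| ≤ |σ| * |r| * |z| + |b| * |r| ^ 2 := by
          refine (abs_add_le _ _).trans_eq ?_
          simp only [abs_mul, abs_pow]
      _ ≤ |σ| * R * |z| + |b| * R ^ 2 := by gcongr
      _ = |b| * R ^ 2 + |σ| * R * |z| := add_comm _ _
  calc |h (σ * r * z + b * r ^ 2)| ≤ M * exp (c * |σ * r * z + b * r ^ 2|) := hb _
    _ ≤ M * exp (c * (|b| * R ^ 2 + |σ| * R * |z|)) := by gcongr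
    _ = M * exp (c * |b| * R ^ 2) * exp (c * |σ| * R * |z|) := by
        rw [mul_assoc M, ← exp_add]; ring_nf

lemma abs_comp_mul_le_of_abs_le_exp (hc : 0 ≤ c) (hb : ∀ y, |h y| ≤ M * exp (c * |y|))
    (b σ : ℝ) {r R : ℝ} (hr : |r| ≤ R) (z : ℝ) :
    |h (σ * r * z + b * r ^ 2) * (σ * z + 2 * b * r)| ≤
      M * exp (c * |b| * R ^ 2) * (|σ| + 2 * |b| * R) * exp ((c * |σ| * R + 1) * |z|) := by
  have hM := nonneg_of_abs_le_mul_exp hb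
  have hR : 0 ≤ R := (abs_nonneg r).trans hr
  have hlin : |σ * z + 2 * b * r| ≤ (|σ| + 2 * |b| * R) * exp |z| := by
    have hz : |z| ≤ exp |z| := by linarith [add_one_le_exp |z|]
    have hr' : |b| * |r| ≤ |b| * R * exp |z| :=
      (mul_le_mul_of_nonneg_left hr (abs_nonneg b)).trans
        (le_mul_of_one_le_right (by positivity) (one_le_exp (abs_nonneg z)))
    calc |σ * z + 2 * b * r| ≤ |σ| * |z| + 2 * (|b| * |r|) := by
          refine (abs_add_le _ _).trans_eq ?_
          simp only [abs_mul, abs_two, mul_assoc]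
      _ ≤ |σ| * exp |z| + 2 * (|b| * R * exp |z|) := by gcongr
      _ = (|σ| + 2 * |b| * R) * exp |z| := by ring
  rw [abs_mul]
  calc |h (σ * r * z + b * r ^ 2)| * |σ * z + 2 * b * r|
      ≤ (M * exp (c * |b| * R ^ 2) * exp (c * |σ| * R * |z|)) *
          ((|σ| + 2 * |b| * R) * exp |z|) :=
        mul_le_mul (abs_comp_le_of_abs_le_exp hc hb b σ hr z) hlin (abs_nonneg _)
          (by positivity)
    _ = M * exp (c * |b| * R ^ 2) * (|σ| + 2 * |b| * R) * exp ((c * |σ| * R + 1) * |z|) := by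
        rw [add_mul _ 1, one_mul, exp_add]; ring

lemma Icc_neg_abs_add_one_mem_nhds (u : ℝ) : Icc (-(|u| + 1)) (|u| + 1) ∈ 𝓝 u :=
  Icc_mem_nhds (by linarith [neg_abs_le u]) (by linarith [le_abs_self u])

variable (b σ : ℝ)

lemma continuous_integral_comp_gaussianReal (hh : Continuous h) (hc : 0 ≤ c)
    (hb : ∀ y, |h y| ≤ M * exp (c * |y|)) :
    Continuous fun u => ∫ z, h (σ * u * z + b * u ^ 2) ∂gaussianReal 0 1 := by
  refine continuous_iff_continuousAt.2 fun u₀ => continuousAt_of_dominated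
    (bound := fun z => M * exp (c * |b| * (|u₀| + 1) ^ 2) * exp (c * |σ| * (|u₀| + 1) * |z|))
    (Eventually.of_forall fun u => (by fun_prop : Continuous _).aestronglyMeasurable) ?_
    ((integrable_exp_mul_abs_gaussianReal _).const_mul _)
    (ae_of_all _ fun z =>
      (by fun_prop : Continuous fun u => h (σ * u * z + b * u ^ 2)).continuousAt)
  filter_upwards [Icc_neg_abs_add_one_mem_nhds u₀] with u hu
  exact ae_of_all _ (abs_comp_le_of_abs_le_exp hc hb b σ (abs_le.2 hu))

lemma hasDerivAt_integral_comp_gaussianReal {h' : ℝ → ℝ} (hh : ∀ x, HasDerivAt h (h' x) x)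
    (hh' : Continuous h') (hc : 0 ≤ c) (hb : ∀ y, |h y| ≤ M * exp (c * |y|))
    (hb' : ∀ y, |h' y| ≤ M * exp (c * |y|)) (u : ℝ) :
    HasDerivAt (fun u => ∫ z, h (σ * u * z + b * u ^ 2) ∂gaussianReal 0 1)
      (∫ z, h' (σ * u * z + b * u ^ 2) * (σ * z + 2 * b * u) ∂gaussianReal 0 1) u := by
  have hcont : Continuous h := continuous_iff_continuousAt.2 fun x => (hh x).continuousAt
  have hw : ∀ r z : ℝ, HasDerivAt (fun r => σ * r * z + b * r ^ 2) (σ * z + 2 * b * r) r :=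
    fun r z => ((((hasDerivAt_id' r).const_mul σ).mul_const z).fun_add
      ((hasDerivAt_pow 2 r).const_mul b)).congr_deriv (by push_cast; ring)
  exact (hasDerivAt_integral_of_dominated_loc_of_deriv_le (Icc_neg_abs_add_one_mem_nhds u)
    (Eventually.of_forall fun r => (by fun_prop : Continuous _).aestronglyMeasurable)
    (integrable_of_abs_le_exp (by fun_prop) (abs_comp_le_of_abs_le_exp hc hb b σ le_rfl))
    (by fun_prop : Continuous _).aestronglyMeasurable
    (ae_of_all _ fun z r hr => abs_comp_mul_le_of_abs_le_exp hc hb' b σ (abs_le.2 hr) z)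
    ((integrable_exp_mul_abs_gaussianReal _).const_mul _)
    (ae_of_all _ fun z r _ => (hh _).comp r (hw r z))).2

lemma integral_deriv_comp_mul_eq_mul_integral_driftGen (hh : ContDiff ℝ 2 h) (hc : 0 ≤ c)
    (hb₁ : ∀ y, |deriv h y| ≤ M * exp (c * |y|))
    (hb₂ : ∀ y, |deriv (deriv h) y| ≤ M * exp (c * |y|)) (u : ℝ) :
    ∫ z, deriv h (σ * u * z + b * u ^ 2) * (σ * z + 2 * b * u) ∂gaussianReal 0 1 =
      2 * u * ∫ z, driftGen b σ h (σ * u * z + b * u ^ 2) ∂gaussianReal 0 1 := by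
  have hd : ContDiff ℝ 1 (deriv h) := hh.deriv'
  have hd₁ : Continuous (deriv h) := hd.continuous
  have hd₂ : Continuous (deriv (deriv h)) := hd.continuous_deriv le_rfl
  have hψ : ∀ z, HasDerivAt (fun z => deriv h (σ * u * z + b * u ^ 2))
      (deriv (deriv h) (σ * u * z + b * u ^ 2) * (σ * u)) z := fun z =>
    (hd.differentiable one_ne_zero _).hasDerivAt.comp z
      ((((hasDerivAt_id' z).const_mul (σ * u)).add_const (b * u ^ 2)).congr_deriv (mul_one _))
  have hb₁' := abs_comp_le_of_abs_le_exp hc hb₁ b σ (le_refl |u|)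
  have i₁ : Integrable (fun z => deriv h (σ * u * z + b * u ^ 2)) (gaussianReal 0 1) :=
    integrable_of_abs_le_exp (by fun_prop) hb₁'
  have i₂ : Integrable (fun z => deriv (deriv h) (σ * u * z + b * u ^ 2)) (gaussianReal 0 1) :=
    integrable_of_abs_le_exp (by fun_prop) (abs_comp_le_of_abs_le_exp hc hb₂ b σ le_rfl)
  have i₃ : Integrable (fun z => z * deriv h (σ * u * z + b * u ^ 2)) (gaussianReal 0 1) :=
    integrable_mul_of_abs_le_exp (by fun_prop) hb₁'
  have hstein := integral_sub_mul_eq_mul_integral_deriv_gaussianReal hψ i₁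
    (by simpa only [sub_zero] using i₃) (i₂.mul_const (σ * u))
  simp only [NNReal.coe_one, one_mul, MeasureTheory.integral_mul_const, sub_zero] at hstein
  calc ∫ z, deriv h (σ * u * z + b * u ^ 2) * (σ * z + 2 * b * u) ∂gaussianReal 0 1
      = σ * ∫ z, z * deriv h (σ * u * z + b * u ^ 2) ∂gaussianReal 0 1 +
          2 * b * u * ∫ z, deriv h (σ * u * z + b * u ^ 2) ∂gaussianReal 0 1 := by
        rw [← MeasureTheory.integral_const_mul, ← MeasureTheory.integral_const_mul,
          ← integral_add (i₃.const_mul _) (i₁.const_mul _)]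
        congr 1 with z
        ring
    _ = 2 * u * ∫ z, driftGen b σ h (σ * u * z + b * u ^ 2) ∂gaussianReal 0 1 := by
        simp only [driftGen]
        rw [integral_add (i₁.const_mul _) (i₂.const_mul _), MeasureTheory.integral_const_mul,
          MeasureTheory.integral_const_mul, hstein]
        ring

end ExpGrowth

noncomputable def bmExpectation (b σ : ℝ) (h : ℝ → ℝ) (s : ℝ) : ℝ :=
  ∫ x, h x ∂gaussianReal (b * s) (σ ^ 2 * s).toNNReal

def HasExpBoundedDerivs (m : ℕ) (M c : ℝ) (f : ℝ → ℝ) : Prop :=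
  ContDiff ℝ m f ∧ ∀ i ≤ m, ∀ y, |iteratedDeriv i f y| ≤ M * exp (c * |y|)

namespace HasExpBoundedDerivs

variable {m : ℕ} {M c : ℝ} {f : ℝ → ℝ}

lemma mono (hf : HasExpBoundedDerivs m M c f) {m' : ℕ} (hm : m' ≤ m) :
    HasExpBoundedDerivs m' M c f :=
  ⟨hf.1.of_le (by exact_mod_cast hm), fun i hi => hf.2 i (hi.trans hm)⟩

lemma abs_le (hf : HasExpBoundedDerivs m M c f) (y : ℝ) : |f y| ≤ M * exp (c * |y|) := by
  simpa using hf.2 0 m.zero_le y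

lemma driftGen (hf : HasExpBoundedDerivs (m + 2) M c f) (b σ : ℝ) :
    HasExpBoundedDerivs m ((|b| + σ ^ 2 / 2) * M) c (driftGen b σ f) := by
  have hf₂ : ContDiff ℝ (m + 1 + 1) f := by exact_mod_cast hf.1
  have h₂ : ContDiff ℝ m (deriv (deriv f)) := hf₂.deriv'.deriv'
  have h₁ : ContDiff ℝ m (deriv f) := hf₂.deriv'.of_le le_self_add
  refine ⟨(contDiff_const.mul h₁).add (contDiff_const.mul h₂), fun i hi y => ?_⟩
  have hiter : iteratedDeriv i (_root_.driftGen b σ f) y =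
      b * iteratedDeriv (i + 1) f y + σ ^ 2 / 2 * iteratedDeriv (i + 2) f y := by
    rw [iteratedDeriv_succ', iteratedDeriv_succ', iteratedDeriv_succ']
    unfold _root_.driftGen
    rw [iteratedDeriv_fun_add ((contDiff_const.mul h₁).contDiffAt.of_le (by exact_mod_cast hi))
        ((contDiff_const.mul h₂).contDiffAt.of_le (by exact_mod_cast hi)),
      iteratedDeriv_const_mul_field, iteratedDeriv_const_mul_field]
  have hb₁ := hf.2 (i + 1) (by omega) y
  have hb₂ := hf.2 (i + 2) (by omega) y
  rw [hiter]
  calc |b * iteratedDeriv (i + 1) f y + σ ^ 2 / 2 * iteratedDeriv (i + 2) f y|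
      ≤ |b| * |iteratedDeriv (i + 1) f y| + σ ^ 2 / 2 * |iteratedDeriv (i + 2) f y| := by
        refine (abs_add_le _ _).trans_eq ?_
        rw [abs_mul, abs_mul, abs_of_nonneg (by positivity : (0 : ℝ) ≤ σ ^ 2 / 2)]
    _ ≤ |b| * (M * exp (c * |y|)) + σ ^ 2 / 2 * (M * exp (c * |y|)) := by gcongr
    _ = (|b| + σ ^ 2 / 2) * M * exp (c * |y|) := by ring

lemma iterate_driftGen (b σ : ℝ) (k : ℕ) (hf : HasExpBoundedDerivs (m + 2 * k) M c f) :
    HasExpBoundedDerivs m ((|b| + σ ^ 2 / 2) ^ k * M) c ((_root_.driftGen b σ)^[k] f) := by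
  induction k generalizing M f with
  | zero => simpa using hf
  | succ k ih =>
    rw [Function.iterate_succ_apply, pow_succ, mul_assoc]
    exact ih (HasExpBoundedDerivs.driftGen (m := m + 2 * k) hf b σ)

end HasExpBoundedDerivs

section BMExpectation

variable (b σ : ℝ) {h : ℝ → ℝ} {M c : ℝ}

lemma bmExpectation_zero (h : ℝ → ℝ) : bmExpectation b σ h 0 = h 0 := by
  simp [bmExpectation]

lemma bmExpectation_sq (hh : Measurable h) (u : ℝ) :
    bmExpectation b σ h (u ^ 2) = ∫ z, h (σ * u * z + b * u ^ 2) ∂gaussianReal 0 1 := by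
  have hmap : (gaussianReal 0 1).map (fun z => σ * u * z + b * u ^ 2) =
      gaussianReal (b * u ^ 2) (σ ^ 2 * u ^ 2).toNNReal := by
    rw [show (fun z => σ * u * z + b * u ^ 2) = (· + b * u ^ 2) ∘ (σ * u * ·) from rfl,
      ← Measure.map_map (by fun_prop) (by fun_prop), gaussianReal_map_const_mul,
      gaussianReal_map_add_const]
    congr 1
    · ring
    · ext
      simp only [mul_one, NNReal.coe_mk, mul_pow]
      exact (Real.coe_toNNReal _ (by positivity)).symm
  rw [bmExpectation, ← hmap, integral_map (by fun_prop) hh.aestronglyMeasurable]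

lemma continuousOn_bmExpectation (hh : HasExpBoundedDerivs 0 M c h)
    (hc : 0 ≤ c) : ContinuousOn (bmExpectation b σ h) (Ici 0) := by
  refine ((continuous_integral_comp_gaussianReal b σ hh.1.continuous hc hh.abs_le).comp
    continuous_sqrt).continuousOn.congr fun s hs => ?_
  rw [Function.comp_apply, ← bmExpectation_sq b σ hh.1.continuous.measurable, sq_sqrt hs]

lemma hasDerivAt_bmExpectation (hh : HasExpBoundedDerivs 2 M c h)
    (hc : 0 ≤ c) {s : ℝ} (hs : 0 < s) :
    HasDerivAt (bmExpectation b σ h) (bmExpectation b σ (driftGen b σ h) s) s := by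
  have hC : ContDiff ℝ 2 h := hh.1
  have hd : ContDiff ℝ 1 (deriv h) := hC.deriv'
  have hb₁ : ∀ y, |deriv h y| ≤ M * exp (c * |y|) := by simpa using hh.2 1 (by norm_num)
  have hb₂ : ∀ y, |deriv (deriv h) y| ≤ M * exp (c * |y|) := by
    simpa [iteratedDeriv_succ'] using hh.2 2 le_rfl
  have hΨ := hasDerivAt_integral_comp_gaussianReal b σ
    (fun x => (hC.differentiable two_ne_zero x).hasDerivAt) hd.continuous hc hh.abs_le hb₁ (√s)
  rw [integral_deriv_comp_mul_eq_mul_integral_driftGen b σ hC hc hb₁ hb₂,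
    ← bmExpectation_sq b σ (by unfold driftGen; fun_prop), sq_sqrt hs.le] at hΨ
  refine ((hΨ.comp s (hasDerivAt_sqrt hs.ne')).congr_deriv ?_).congr_of_eventuallyEq ?_
  · field_simp
  · filter_upwards [Ioi_mem_nhds hs] with r hr
    rw [Function.comp_apply, ← bmExpectation_sq b σ hC.continuous.measurable, sq_sqrt hr.le]

end BMExpectation

section Taylor

open Finset Nat

lemma hasDerivAt_sum_sub_pow_div_factorial_mul (f : ℕ → ℝ → ℝ) (t s : ℝ) (n : ℕ)
    (hf : ∀ k ≤ n, HasDerivAt (f k) (f (k + 1) s) s) :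
    HasDerivAt (fun r => ∑ k ∈ range (n + 1), (t - r) ^ k / k ! * f k r)
      ((t - s) ^ n / n ! * f (n + 1) s) s := by
  induction n with
  | zero => simpa using hf 0 le_rfl
  | succ n ih =>
    have hpow : HasDerivAt (fun r => (t - r) ^ (n + 1) / (n + 1)!)
        (-((t - s) ^ n / n !)) s := by
      refine (((hasDerivAt_id' s).const_sub t).pow (n + 1)).div_const _ |>.congr_deriv ?_
      rw [Nat.factorial_succ]
      push_cast
      field_simp
    simp only [sum_range_succ _ (n + 1)]
    refine ((ih fun k hk => hf k (by omega)).fun_add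
      (hpow.fun_mul (hf (n + 1) le_rfl))).congr_deriv ?_
    ring

theorem taylor_integral_remainder_of_hasDerivAt (f : ℕ → ℝ → ℝ) {t : ℝ} (ht : 0 ≤ t) (n : ℕ)
    (hcont : ∀ k ≤ n + 1, ContinuousOn (f k) (Icc 0 t))
    (hderiv : ∀ k ≤ n, ∀ s ∈ Ioo 0 t, HasDerivAt (f k) (f (k + 1) s) s) :
    f 0 t = ∑ k ∈ range (n + 1), t ^ k / k ! * f k 0 +
      ∫ s in 0..t, (t - s) ^ n / n ! * f (n + 1) s := by
  have hftc := integral_eq_sub_of_hasDerivAt_of_le ht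
    (continuousOn_finsetSum _ fun k hk => (by fun_prop : Continuous fun r =>
      (t - r) ^ k / k !).continuousOn.mul (hcont k (by simp at hk; omega)))
    (fun s hs => hasDerivAt_sum_sub_pow_div_factorial_mul f t s n fun k hk => hderiv k hk s hs)
    (((by fun_prop : Continuous fun s => (t - s) ^ n / n !).continuousOn.fun_mul
      (hcont (n + 1) le_rfl)).intervalIntegrable_of_Icc ht)
  rw [hftc, sum_range_succ' (fun k => ((fun r => (t - r) ^ k / (k ! : ℝ)) * f k) t)]
  simp

lemma integral_sub_pow_div_factorial_mul (w : ℝ → ℝ) (n : ℕ) (t : ℝ) :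
    ∫ s in 0..t, (t - s) ^ n / n ! * w s =
      t ^ (n + 1) / n ! * ∫ α in (0 : ℝ)..1, (1 - α) ^ n * w (α * t) := by
  rcases eq_or_ne t 0 with rfl | ht
  · simp
  have hsub := intervalIntegral.integral_comp_mul_right (fun s => (t - s) ^ n * w s) ht
    (a := 0) (b := 1)
  simp only [zero_mul, one_mul, smul_eq_mul] at hsub
  have hpull : ∫ α in (0 : ℝ)..1, (1 - α) ^ n * w (α * t) =
      (t ^ n)⁻¹ * ∫ α in (0 : ℝ)..1, (t - α * t) ^ n * w (α * t) := by
    rw [← intervalIntegral.integral_const_mul]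
    congr 1 with α
    rw [show t - α * t = t * (1 - α) by ring, mul_pow]
    field_simp
  simp only [hpull, hsub, ← intervalIntegral.integral_const_mul]
  congr 1 with s
  field_simp
  ring

end Taylor

theorem iterated_dynkin_gaussian_general
    (b σ : ℝ) (n : ℕ) (g : ℝ → ℝ)
    (hg : ContDiff ℝ (2 * n + 2 : ℕ) g)
    (hbound : ∃ M c : ℝ, 0 < c ∧ ∀ i ≤ 2 * n + 2, ∀ y : ℝ,
      |iteratedDeriv i g y| ≤ M * Real.exp (c * |y|)) :
    ∀ t : ℝ, 0 < t →
      ∫ x, g x ∂(gaussianReal (b * t) (σ ^ 2 * t).toNNReal) =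
        g 0 + ∑ k ∈ Finset.Icc 1 n, t ^ k / (Nat.factorial k) * (driftGen b σ)^[k] g 0 +
          t ^ (n + 1) / (Nat.factorial n) *
            ∫ α in (0 : ℝ)..1, (1 - α) ^ n *
              ∫ x, (driftGen b σ)^[n + 1] g x
                ∂(gaussianReal (b * (α * t)) (σ ^ 2 * (α * t)).toNNReal) := by
  obtain ⟨M, c, hc, hb⟩ := hbound
  intro t ht
  have hL : ∀ k m, m + 2 * k ≤ 2 * n + 2 →
      HasExpBoundedDerivs m ((|b| + σ ^ 2 / 2) ^ k * M) c ((driftGen b σ)^[k] g) :=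
    fun k m hkm => .iterate_driftGen b σ k (HasExpBoundedDerivs.mono ⟨hg, hb⟩ hkm)
  have htaylor := taylor_integral_remainder_of_hasDerivAt
    (fun k => bmExpectation b σ ((driftGen b σ)^[k] g)) ht.le n
    (fun k hk => (continuousOn_bmExpectation b σ (hL k 0 (by omega)) hc.le).mono
      Icc_subset_Ici_self)
    (fun k hk s hs => by
      simpa only [Function.iterate_succ_apply'] using
        hasDerivAt_bmExpectation b σ (hL k 2 (by omega)) hc.le hs.1)
  rw [integral_sub_pow_div_factorial_mul, Finset.range_eq_Ico,
    Finset.sum_eq_sum_Ico_succ_bot (by omega : 0 < n + 1), zero_add,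
    Finset.Ico_add_one_right_eq_Icc] at htaylor
  simpa [bmExpectation_zero, bmExpectation] using htaylor

/-- Iterated Dynkin expansion for Brownian motion with drift: for `g ∈ C^{2n+2}` with
exponentially bounded derivatives,
`∫ g d𝒩(bt, σ²t) = g(0) + Σ_{k=1}^n (t^k/k!) L^k g(0)
  + (t^{n+1}/n!) ∫₀¹ (1-α)^n ∫ L^{n+1} g d𝒩(bαt, σ²αt) dα`. -/
theorem iterated_dynkin_gaussian
    (b σ : ℝ) (hσ : 0 ≤ σ) (n : ℕ) (g : ℝ → ℝ)
    (hg : ContDiff ℝ (2 * n + 2 : ℕ) g)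
    (hbound : ∃ M c : ℝ, 0 < c ∧ ∀ i ≤ 2 * n + 2, ∀ y : ℝ,
      |iteratedDeriv i g y| ≤ M * Real.exp (c * |y|)) :
    ∀ t : ℝ, 0 < t →
      ∫ x, g x ∂(gaussianReal (b * t) (σ ^ 2 * t).toNNReal) =
        g 0 + ∑ k ∈ Finset.Icc 1 n, t ^ k / (Nat.factorial k) * (driftGen b σ)^[k] g 0 +
          t ^ (n + 1) / (Nat.factorial n) *
            ∫ α in (0 : ℝ)..1, (1 - α) ^ n *
              ∫ x, (driftGen b σ)^[n + 1] g x
                ∂(gaussianReal (b * (α * t)) (σ ^ 2 * (α * t)).toNNReal) :=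
  iterated_dynkin_gaussian_general b σ n g hg hbound
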